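/- Let t0 < t1, A ∈ ℝ^{n×n}, B ∈ ℝ^{n×p}, and let 𝔾 = ∫_{t0}^{t1} e^{(t1−s)A} B Bᵀ e^{(t1−s)Aᵀ} ds. Then range 𝔾 = ℛ(A,B), where ℛ(A,B) := span{ A^i b_j : i ≥ 0, 1 ≤ j ≤ p } and b_j denotes the j-th column of B. -/

import Mathlib

open MeasureTheory Matrix NormedSpace

/-- The controllability Gramian `𝔾 = ∫_{t0}^{t1} e^{(t1−s)A} B Bᵀ e^{(t1−s)Aᵀ} ds`. -/
noncomputable def gramian {n p : ℕ} (A : Matrix (Fin n) (Fin n) ℝ)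
    (B : Matrix (Fin n) (Fin p) ℝ) (t0 t1 : ℝ) : Matrix (Fin n) (Fin n) ℝ :=
  Matrix.of fun i j =>
    ∫ s in t0..t1, (NormedSpace.exp ((t1 - s) • A) * B * Bᵀ * NormedSpace.exp ((t1 - s) • Aᵀ)) i j

/-- The controllable space `ℛ(A,B) = span{ A^i b_j : i ≥ 0, 1 ≤ j ≤ p }`,
where `b_j` is the `j`-th column of `B`. -/
def controllableSpace {n p : ℕ} (A : Matrix (Fin n) (Fin n) ℝ)
    (B : Matrix (Fin n) (Fin p) ℝ) : Submodule ℝ (Fin n → ℝ) :=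
  Submodule.span ℝ {v | ∃ (i : ℕ) (j : Fin p), v = (A ^ i).mulVec fun k => B k j}

namespace Statement5Aux

variable {n p : ℕ}

/-- The linear functional `X ↦ ((C * X * D) *ᵥ x) j`. -/
noncomputable def entL (C : Matrix (Fin p) (Fin n) ℝ) (D : Matrix (Fin n) (Fin n) ℝ)
    (x : Fin n → ℝ) (j : Fin p) : Matrix (Fin n) (Fin n) ℝ →ₗ[ℝ] ℝ where
  toFun X := ((C * X * D).mulVec x) j
  map_add' X Y := by simp [Matrix.mul_add, Matrix.add_mul, Matrix.add_mulVec]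
  map_smul' c X := by simp [Matrix.mul_smul, Matrix.smul_mul, Matrix.smul_mulVec]

theorem exp_cont (M : Matrix (Fin n) (Fin n) ℝ) :
    Continuous fun t : ℝ => NormedSpace.exp (t • M) := by
  letI : SeminormedRing (Matrix (Fin n) (Fin n) ℝ) := Matrix.linftyOpSemiNormedRing
  letI : NormedRing (Matrix (Fin n) (Fin n) ℝ) := Matrix.linftyOpNormedRing
  letI : NormedAlgebra ℝ (Matrix (Fin n) (Fin n) ℝ) := Matrix.linftyOpNormedAlgebra
  letI : NormedAlgebra ℚ (Matrix (Fin n) (Fin n) ℝ) := Matrix.linftyOpNormedAlgebra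
  exact exp_continuous.comp (continuous_id.smul continuous_const)

theorem hasDerivAt_ent (C : Matrix (Fin p) (Fin n) ℝ) (D M : Matrix (Fin n) (Fin n) ℝ)
    (x : Fin n → ℝ) (j : Fin p) (t : ℝ) :
    HasDerivAt (fun u : ℝ => ((C * NormedSpace.exp (u • M) * D).mulVec x) j)
      ((C * (NormedSpace.exp (t • M) * M) * D).mulVec x j) t := by
  letI : SeminormedRing (Matrix (Fin n) (Fin n) ℝ) := Matrix.linftyOpSemiNormedRing
  letI : NormedRing (Matrix (Fin n) (Fin n) ℝ) := Matrix.linftyOpNormedRing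
  letI : NormedAlgebra ℝ (Matrix (Fin n) (Fin n) ℝ) := Matrix.linftyOpNormedAlgebra
  have h1 : HasDerivAt (fun u : ℝ => NormedSpace.exp (u • M)) (NormedSpace.exp (t • M) * M) t :=
    hasDerivAt_exp_smul_const M t
  have h2 := (((entL C D x j).toContinuousLinearMap).hasFDerivAt.comp t h1.hasFDerivAt).hasDerivAt
  refine h2.congr_deriv ?_
  show entL C D x j ((1:ℝ) • (NormedSpace.exp (t • M) * M)) = _
  rw [one_smul]
  rfl

theorem cont_ent (C : Matrix (Fin p) (Fin n) ℝ) (D M : Matrix (Fin n) (Fin n) ℝ)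
    (x : Fin n → ℝ) (j : Fin p) {f : ℝ → ℝ} (hf : Continuous f) :
    Continuous (fun s : ℝ => ((C * NormedSpace.exp (f s • M) * D).mulVec x) j) := by
  letI : SeminormedRing (Matrix (Fin n) (Fin n) ℝ) := Matrix.linftyOpSemiNormedRing
  letI : NormedRing (Matrix (Fin n) (Fin n) ℝ) := Matrix.linftyOpNormedRing
  letI : NormedAlgebra ℝ (Matrix (Fin n) (Fin n) ℝ) := Matrix.linftyOpNormedAlgebra
  letI : NormedAlgebra ℚ (Matrix (Fin n) (Fin n) ℝ) := Matrix.linftyOpNormedAlgebra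
  have := ((entL C D x j).toContinuousLinearMap).continuous.comp
    (exp_continuous.comp (hf.smul (continuous_const (y := M))))
  simp only [Function.comp_def, entL] at this
  exact this

/-- If `C Mᵏ x = 0` for all `k`, then `C e^{tM} x = 0`. -/
theorem exp_vanish (C : Matrix (Fin p) (Fin n) ℝ) (M : Matrix (Fin n) (Fin n) ℝ)
    (x : Fin n → ℝ) (hx : ∀ k : ℕ, (C * M ^ k).mulVec x = 0) (t : ℝ) :
    (C * NormedSpace.exp (t • M)).mulVec x = 0 := by
  letI : SeminormedRing (Matrix (Fin n) (Fin n) ℝ) := Matrix.linftyOpSemiNormedRing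
  letI : NormedRing (Matrix (Fin n) (Fin n) ℝ) := Matrix.linftyOpNormedRing
  letI : NormedAlgebra ℝ (Matrix (Fin n) (Fin n) ℝ) := Matrix.linftyOpNormedAlgebra
  funext j
  have hs : HasSum (fun k : ℕ => ((Nat.factorial k : ℝ)⁻¹) • (t • M) ^ k) (NormedSpace.exp (t • M)) :=
    exp_series_hasSum_exp' (t • M)
  have hs2 := ((entL C 1 x j).toContinuousLinearMap).hasSum hs
  have hz : ∀ k : ℕ, ((entL C 1 x j).toContinuousLinearMap)
      (((Nat.factorial k : ℝ)⁻¹) • (t • M) ^ k) = 0 := by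
    intro k
    have := congrFun (hx k) j
    simp only [entL, smul_pow, smul_smul, LinearMap.coe_toContinuousLinearMap',
      LinearMap.coe_mk, AddHom.coe_mk, Matrix.mul_smul, Matrix.smul_mul,
      Matrix.smul_mulVec, Matrix.mul_one, Pi.smul_apply, smul_eq_mul] at *
    simp [this]
  have h3 : ((entL C 1 x j).toContinuousLinearMap) (NormedSpace.exp (t • M)) = 0 :=
    hs2.unique (by simpa [hz] using hasSum_zero)
  simpa [entL] using h3

/-- If `C e^{tM} x = 0` for `t ∈ [0,T]` then `C Mᵏ x = 0` for all `k`. -/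
theorem deriv_induction (C : Matrix (Fin p) (Fin n) ℝ) (M : Matrix (Fin n) (Fin n) ℝ)
    (x : Fin n → ℝ) {T : ℝ} (hT : 0 < T)
    (h0 : ∀ t ∈ Set.Icc (0:ℝ) T, (C * NormedSpace.exp (t • M)).mulVec x = 0) :
    ∀ k : ℕ, (C * M ^ k).mulVec x = 0 := by
  have key : ∀ k : ℕ, ∀ t ∈ Set.Ioo (0:ℝ) T, ∀ j,
      ((C * NormedSpace.exp (t • M) * M ^ k).mulVec x) j = 0 := by
    intro k
    induction k with
    | zero =>
      intro t ht j
      have := congrFun (h0 t (Set.mem_Icc_of_Ioo ht)) j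
      simpa using this
    | succ k ih =>
      intro t ht j
      have hev : (fun u : ℝ => ((C * NormedSpace.exp (u • M) * M ^ k).mulVec x) j) =ᶠ[nhds t]
          (fun _ => (0:ℝ)) := by
        filter_upwards [Ioo_mem_nhds ht.1 ht.2] with u hu
        exact ih u hu j
      have hd := hasDerivAt_ent C (M ^ k) M x j t
      have hd0 : HasDerivAt (fun u : ℝ => ((C * NormedSpace.exp (u • M) * M ^ k).mulVec x) j) 0 t :=
        (hasDerivAt_const t (0:ℝ)).congr_of_eventuallyEq hev
      have heq := hd.unique hd0
      have hre : C * (NormedSpace.exp (t • M) * M) * M ^ k = C * NormedSpace.exp (t • M) * M ^ (k+1) := by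
        rw [pow_succ', Matrix.mul_assoc, Matrix.mul_assoc, Matrix.mul_assoc]
      rw [hre] at heq
      rw [heq]
  intro k
  funext j
  have hcont := cont_ent C (M ^ k) M x j (continuous_id)
  have heq0 : Set.EqOn (fun t : ℝ => ((C * NormedSpace.exp (t • M) * M ^ k).mulVec x) j)
      (fun _ => (0:ℝ)) (Set.Icc 0 T) := by
    have h1 : Set.EqOn (fun t : ℝ => ((C * NormedSpace.exp (t • M) * M ^ k).mulVec x) j)
        (fun _ => (0:ℝ)) (Set.Ioo 0 T) := fun t ht => key k t ht j
    have := h1.closure (by simpa using hcont) continuous_const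
    rwa [closure_Ioo hT.ne] at this
  have := heq0 (Set.left_mem_Icc.2 hT.le)
  simpa using this

variable (A : Matrix (Fin n) (Fin n) ℝ) (B : Matrix (Fin n) (Fin p) ℝ) (t0 t1 : ℝ)

/-- The integrand matrix. -/
noncomputable def NN (s : ℝ) : Matrix (Fin n) (Fin n) ℝ :=
  NormedSpace.exp ((t1 - s) • A) * B * Bᵀ * NormedSpace.exp ((t1 - s) • Aᵀ)

theorem NN_eq (s : ℝ) :
    NN A B t1 s = (NormedSpace.exp ((t1 - s) • A) * B) * (NormedSpace.exp ((t1 - s) • A) * B)ᵀ := by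
  rw [NN, Matrix.transpose_mul, ← Matrix.transpose_smul, Matrix.exp_transpose,
    Matrix.mul_assoc]

theorem NN_cont : Continuous fun s => NN A B t1 s := by
  have he : Continuous fun s : ℝ => NormedSpace.exp ((t1 - s) • A) :=
    (exp_cont A).comp (continuous_const.sub continuous_id)
  have he2 : Continuous fun s : ℝ => NormedSpace.exp ((t1 - s) • Aᵀ) := by
    have heq : (fun s : ℝ => NormedSpace.exp ((t1 - s) • Aᵀ)) = fun s => (NormedSpace.exp ((t1 - s) • A))ᵀ := by
      funext s; rw [← Matrix.exp_transpose, Matrix.transpose_smul]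
    rw [heq]; exact he.matrix_transpose
  unfold NN
  exact ((he.matrix_mul continuous_const).matrix_mul continuous_const).matrix_mul he2

theorem NN_entry_cont (i j : Fin n) : Continuous fun s => NN A B t1 s i j :=
  (NN_cont A B t1).matrix_elem i j

theorem gramian_mulVec (x : Fin n → ℝ) (i : Fin n) :
    ((gramian A B t0 t1).mulVec x) i = ∫ s in t0..t1, ((NN A B t1 s).mulVec x) i := by
  have hint : ∀ j : Fin n, IntervalIntegrable (fun s => NN A B t1 s i j * x j)
      volume t0 t1 :=
    fun j => ((NN_entry_cont A B t1 i j).mul continuous_const).intervalIntegrable t0 t1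
  calc ((gramian A B t0 t1).mulVec x) i
      = ∑ j, (∫ s in t0..t1, NN A B t1 s i j) * x j := by
        simp [gramian, Matrix.mulVec, dotProduct, NN]
    _ = ∑ j, ∫ s in t0..t1, NN A B t1 s i j * x j := by
        refine Finset.sum_congr rfl fun j _ => ?_
        rw [intervalIntegral.integral_mul_const]
    _ = ∫ s in t0..t1, ∑ j, NN A B t1 s i j * x j := by
        rw [intervalIntegral.integral_finset_sum]
        exact fun j _ => hint j
    _ = ∫ s in t0..t1, ((NN A B t1 s).mulVec x) i := by
        simp [Matrix.mulVec, dotProduct]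

/-- key kernel characterization -/
theorem ker_iff (ht : t0 < t1) (x : Fin n → ℝ) :
    (gramian A B t0 t1).mulVec x = 0 ↔ ∀ k : ℕ, (Bᵀ * Aᵀ ^ k).mulVec x = 0 := by
  constructor
  · intro hG
    -- quadratic form is zero
    set g : ℝ → Fin p → ℝ := fun s => (Bᵀ * NormedSpace.exp ((t1 - s) • Aᵀ)).mulVec x with hg
    have hquad : ∀ s, x ⬝ᵥ ((NN A B t1 s).mulVec x) = ∑ j, (g s j)^2 := by
      intro s
      rw [NN_eq]
      set P := NormedSpace.exp ((t1 - s) • A) * B with hP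
      have h1 : (P * Pᵀ).mulVec x = P.mulVec (Pᵀ.mulVec x) := (Matrix.mulVec_mulVec _ _ _).symm
      rw [h1, Matrix.dotProduct_mulVec, ← Matrix.mulVec_transpose]
      have h2 : Pᵀ.mulVec x = g s := by
        rw [hP, Matrix.transpose_mul, ← Matrix.exp_transpose, Matrix.transpose_smul]
      rw [h2]
      simp [dotProduct, sq]
    have hgcont : ∀ j, Continuous fun s => g s j := by
      intro j
      have := cont_ent Bᵀ 1 Aᵀ x j (f := fun s => t1 - s)
        (continuous_const.sub continuous_id)
      simpa [hg] using this
    have hFcont : Continuous fun s => ∑ j, (g s j)^2 :=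
      continuous_finset_sum _ fun j _ => ((hgcont j).pow 2)
    have hzero : (∫ s in t0..t1, ∑ j, (g s j)^2) = 0 := by
      have hswap : (∫ s in t0..t1, ∑ j, (g s j)^2) = x ⬝ᵥ ((gramian A B t0 t1).mulVec x) := by
        have : ∀ i, x i * ((gramian A B t0 t1).mulVec x) i
            = ∫ s in t0..t1, x i * ((NN A B t1 s).mulVec x) i := by
          intro i
          rw [gramian_mulVec, intervalIntegral.integral_const_mul]
        calc (∫ s in t0..t1, ∑ j, (g s j)^2)
            = ∫ s in t0..t1, x ⬝ᵥ ((NN A B t1 s).mulVec x) := by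
              refine intervalIntegral.integral_congr fun s _ => (hquad s).symm
          _ = ∫ s in t0..t1, ∑ i, x i * ((NN A B t1 s).mulVec x) i := by rfl
          _ = ∑ i, ∫ s in t0..t1, x i * ((NN A B t1 s).mulVec x) i := by
              rw [intervalIntegral.integral_finset_sum]
              intro i _
              have hc : Continuous fun s => x i * ((NN A B t1 s).mulVec x) i := by
                refine continuous_const.mul ?_
                have : Continuous fun s => (NN A B t1 s).mulVec x :=
                  (NN_cont A B t1).matrix_mulVec continuous_const
                exact (continuous_apply i).comp this
              exact hc.intervalIntegrable t0 t1
          _ = ∑ i, x i * ((gramian A B t0 t1).mulVec x) i := by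
              refine Finset.sum_congr rfl fun i _ => (this i).symm
          _ = x ⬝ᵥ ((gramian A B t0 t1).mulVec x) := rfl
      rw [hswap, hG]
      simp
    -- deduce g vanishes on [t0, t1]
    have hgzero : ∀ s ∈ Set.Icc t0 t1, ∀ j, g s j = 0 := by
      intro s hs j
      by_contra hne
      have hpos : 0 < ∑ j, (g s j)^2 := by
        refine Finset.sum_pos' (fun j _ => sq_nonneg _) ⟨j, Finset.mem_univ j, ?_⟩
        have habs := abs_pos.mpr hne
        have h2 : 0 < |g s j| ^ 2 := pow_pos habs 2
        rwa [sq_abs] at h2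
      have := intervalIntegral.integral_pos ht (hFcont.continuousOn)
        (fun u _ => Finset.sum_nonneg fun j _ => sq_nonneg _) ⟨s, hs, hpos⟩
      rw [hzero] at this
      exact lt_irrefl 0 this
    -- transfer to [0, T] and apply derivative induction
    have h0 : ∀ t ∈ Set.Icc (0:ℝ) (t1 - t0), (Bᵀ * NormedSpace.exp (t • Aᵀ)).mulVec x = 0 := by
      intro t htt
      funext j
      have hs : t1 - t ∈ Set.Icc t0 t1 := by
        constructor <;> [linarith [htt.2]; linarith [htt.1]]
      have := hgzero (t1 - t) hs j
      simpa [hg, show t1 - (t1 - t) = t by ring] using this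
    exact deriv_induction Bᵀ Aᵀ x (by linarith : (0:ℝ) < t1 - t0) h0
  · intro hK
    funext i
    rw [gramian_mulVec]
    have : ∀ s : ℝ, ((NN A B t1 s).mulVec x) = 0 := by
      intro s
      rw [NN_eq, ← Matrix.mulVec_mulVec]
      have h2 : (NormedSpace.exp ((t1 - s) • A) * B)ᵀ.mulVec x
          = (Bᵀ * NormedSpace.exp ((t1 - s) • Aᵀ)).mulVec x := by
        rw [Matrix.transpose_mul, ← Matrix.transpose_smul, Matrix.exp_transpose]
      rw [h2, exp_vanish Bᵀ Aᵀ x hK (t1 - s), Matrix.mulVec_zero]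
    simp [this]

/-- dot product form of the kernel condition -/
theorem dot_form (x : Fin n → ℝ) (k : ℕ) (j : Fin p) :
    ((Bᵀ * Aᵀ ^ k).mulVec x) j = ((A ^ k).mulVec fun i => B i j) ⬝ᵥ x := by
  rw [← Matrix.transpose_pow, ← Matrix.transpose_mul, Matrix.mulVec_transpose]
  simp only [Matrix.vecMul, Matrix.mulVec, dotProduct, Matrix.mul_apply,
    Finset.sum_mul, Finset.mul_sum]
  refine Finset.sum_congr rfl fun a _ => Finset.sum_congr rfl fun b _ => by ring

end Statement5Aux

open Statement5Aux in
/-- `range 𝔾 = ℛ(A,B)`. -/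
theorem statement_5 (n p : ℕ) (t0 t1 : ℝ) (ht : t0 < t1)
    (A : Matrix (Fin n) (Fin n) ℝ) (B : Matrix (Fin n) (Fin p) ℝ) :
    LinearMap.range (gramian A B t0 t1).mulVecLin = controllableSpace A B := by
  classical
  set 𝔾 := gramian A B t0 t1 with h𝔾
  -- symmetry of the Gramian
  have hGsym : 𝔾ᵀ = 𝔾 := by
    have hNsym : ∀ s, (NN A B t1 s)ᵀ = NN A B t1 s := by
      intro s
      rw [NN_eq, Matrix.transpose_mul, Matrix.transpose_transpose, ← NN_eq]
    funext i j
    show 𝔾 j i = 𝔾 i j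
    simp only [h𝔾, gramian, Matrix.of_apply]
    refine intervalIntegral.integral_congr fun s _ => ?_
    have := congrFun (congrFun (hNsym s) i) j
    simpa [NN, Matrix.transpose_apply] using this
  -- Euclidean space setup
  set e := WithLp.linearEquiv 2 ℝ (Fin n → ℝ) with he
  set T : EuclideanSpace ℝ (Fin n) →ₗ[ℝ] EuclideanSpace ℝ (Fin n) :=
    e.symm.toLinearMap ∘ₗ 𝔾.mulVecLin ∘ₗ e.toLinearMap with hT
  have hTapp : ∀ u, e (T u) = 𝔾.mulVec (e u) := by
    intro u; simp [hT]
  have hinner : ∀ u v : EuclideanSpace ℝ (Fin n), inner ℝ u v = (e u) ⬝ᵥ (e v) := by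
    intro u v
    simp [PiLp.inner_apply, RCLike.inner_apply, dotProduct, he, mul_comm]
  have hdotsym : ∀ y z : Fin n → ℝ, (𝔾.mulVec y) ⬝ᵥ z = y ⬝ᵥ (𝔾.mulVec z) := by
    intro y z
    rw [Matrix.dotProduct_mulVec y 𝔾 z, ← Matrix.mulVec_transpose, hGsym]
  have hsym : ∀ u v, inner ℝ (T u) v = (inner ℝ u (T v) : ℝ) := by
    intro u v
    rw [hinner, hinner, hTapp, hTapp, hdotsym]
  -- range T = (ker T)ᗮ
  have horth : (LinearMap.range T)ᗮ = LinearMap.ker T := by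
    ext u
    rw [Submodule.mem_orthogonal, LinearMap.mem_ker]
    constructor
    · intro h
      have h1 := h (T (T u)) ⟨T u, rfl⟩
      rw [hsym] at h1
      exact inner_self_eq_zero.mp h1
    · intro h v hv
      obtain ⟨w, rfl⟩ := hv
      rw [hsym, h, inner_zero_right]
  have hrange : LinearMap.range T = (LinearMap.ker T)ᗮ := by
    rw [← horth, Submodule.orthogonal_orthogonal]
  -- kernel = orthogonal complement of controllable space (pulled back)
  set R : Submodule ℝ (EuclideanSpace ℝ (Fin n)) :=
    (controllableSpace A B).comap e.toLinearMap with hR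
  have hmemR : ∀ u, u ∈ R ↔ e u ∈ controllableSpace A B := fun u => Iff.rfl
  have hker : LinearMap.ker T = Rᗮ := by
    ext u
    rw [LinearMap.mem_ker, Submodule.mem_orthogonal]
    have h1 : T u = 0 ↔ 𝔾.mulVec (e u) = 0 := by
      constructor
      · intro h; rw [← hTapp, h]; simp
      · intro h
        apply e.injective
        rw [hTapp, h]; simp
    rw [h1, ker_iff A B t0 t1 ht]
    constructor
    · intro hK v hv
      rw [hinner]
      rw [hmemR] at hv
      refine Submodule.span_induction ?_ ?_ ?_ ?_ hv
      · rintro w ⟨k, j, rfl⟩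
        have := congrFun (hK k) j
        rw [dot_form] at this
        simpa using this
      · simp
      · intro a b _ _ ha hb
        rw [add_dotProduct, ha, hb, add_zero]
      · intro c a _ ha
        rw [smul_dotProduct, ha, smul_zero]
    · intro hO k
      funext j
      rw [dot_form]
      have hmem : (e.symm ((A ^ k).mulVec fun i => B i j)) ∈ R := by
        rw [hmemR]
        simp only [LinearEquiv.apply_symm_apply]
        exact Submodule.subset_span ⟨k, j, rfl⟩
      have := hO _ hmem
      rw [hinner] at this
      simpa using this
  -- conclude
  have hrangeR : LinearMap.range T = R := by
    rw [hrange, hker, Submodule.orthogonal_orthogonal]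
  ext v
  constructor
  · rintro ⟨y, rfl⟩
    have : T (e.symm y) ∈ LinearMap.range T := ⟨e.symm y, rfl⟩
    rw [hrangeR, hmemR] at this
    rw [hTapp] at this
    simpa using this
  · intro hv
    have : e.symm v ∈ R := by
      rw [hmemR]; simpa using hv
    rw [← hrangeR] at this
    obtain ⟨u, hu⟩ := this
    refine ⟨e u, ?_⟩
    have := congrArg e hu
    rw [hTapp] at this
    simpa using this
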